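/- In the type C_ℓ^{(1)} residue pattern, the i × i square Young diagram λ(i) = (i, i, ..., i) with i/2 rows of length i (for i even, 0 ≤ i ≤ ℓ) has multiset of residues whose content sum satisfies Σ_{nodes b of λ(i)} α_{res(b)} = (i/2)α_0 + (i-1)α_1 + (i-2)α_2 + ... + α_{i-1} = (i/2)δ − ϖ_i. -/
import Mathlib


/-- The C_ℓ^{(1)} residue of a node in row p, column q (0-based):
res = min(r, 2ℓ − r) where r = (q − p) mod 2ℓ. -/
def resN (ℓ p q : ℕ) : ℕ :=
  let r := (((q : ℤ) - (p : ℤ)) % (2 * ℓ)).toNat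
  min r (2 * ℓ - r)

/-- Coefficient of α_k in the null root δ = α₀ + 2α₁ + ⋯ + 2α_{ℓ-1} + α_ℓ. -/
def delCoef (ℓ k : ℕ) : ℚ :=
  if k = 0 ∨ k = ℓ then 1 else if k ≤ ℓ then 2 else 0

/-- Coefficient of α_k in ϖ_i = α₁ + 2α₂ + ⋯ + (i-1)α_{i-1}
+ i(α_i + ⋯ + α_{ℓ-1} + (1/2)α_ℓ). -/
def varpiCoef (ℓ i : ℕ) : ℕ → ℚ :=
  fun k => if k = 0 ∨ ℓ < k then 0
    else if k = ℓ then (i : ℚ) / 2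
    else if k < i then (k : ℚ) else (i : ℚ)

lemma resN_abs (ℓ p q : ℕ) (hp : p < ℓ) (hq : q < ℓ) :
    resN ℓ p q = if p ≤ q then q - p else p - q := by
  unfold resN
  dsimp only
  rcases le_or_gt p q with h | h
  · have h1 : ((q:ℤ) - p) % (2*ℓ) = (q:ℤ) - p :=
      Int.emod_eq_of_lt (by omega) (by omega)
    rw [h1, if_pos h]
    omega
  · have h1 : ((q:ℤ) - p) % (2*ℓ) = (q:ℤ) - p + 2*ℓ := by
      have h2 : ((q:ℤ) - p) % (2*ℓ) = ((q:ℤ) - p + 2*ℓ) % (2*ℓ) := by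
        simp [Int.add_mul_emod_self_left]
      rw [h2, Int.emod_eq_of_lt (by omega) (by omega)]
    rw [h1, if_neg (not_le.mpr h)]
    omega

/-- for even i ≤ ℓ, the (i/2) × i rectangular Young diagram λ(i)
has content Σ_{b ∈ λ(i)} α_{res(b)} = (i/2)δ − ϖ_i, i.e. for each residue k the
number of k-nodes of λ(i) is the coefficient of α_k in (i/2)δ − ϖ_i. -/
theorem stmt14 (ℓ i : ℕ) (hℓ : 2 ≤ ℓ) (hi : i ≤ ℓ) (hev : Even i) (k : ℕ) :
    ((((Finset.range (i / 2)) ×ˢ (Finset.range i)).filter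
        (fun pq => resN ℓ pq.1 pq.2 = k)).card : ℚ)
      = ((i : ℚ) / 2) * delCoef ℓ k - varpiCoef ℓ i k := by
  obtain ⟨m, rfl⟩ := hev
  have hdiv : (m + m) / 2 = m := by omega
  rw [hdiv]
  rcases Nat.eq_zero_or_pos k with rfl | hk
  · -- k = 0 : diagonal
    have hset : ((Finset.range m) ×ˢ (Finset.range (m + m))).filter
          (fun pq => resN ℓ pq.1 pq.2 = 0)
        = (Finset.range m).image (fun p => (p, p)) := by
      ext ⟨p, q⟩
      simp only [Finset.mem_filter, Finset.mem_product, Finset.mem_range,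
        Finset.mem_image]
      constructor
      · rintro ⟨⟨hp, hq⟩, hres⟩
        rw [resN_abs ℓ p q (by omega) (by omega)] at hres
        have hpq : p = q := by split_ifs at hres <;> omega
        subst hpq
        exact ⟨p, hp, rfl⟩
      · rintro ⟨a, ha, h⟩
        rw [Prod.mk.injEq] at h
        obtain ⟨rfl, rfl⟩ := h
        refine ⟨⟨ha, by omega⟩, ?_⟩
        rw [resN_abs ℓ a a (by omega) (by omega)]
        simp
    rw [hset, Finset.card_image_of_injective _ (fun a b h => (Prod.ext_iff.mp h).1)]
    have hd : delCoef ℓ 0 = 1 := by simp [delCoef]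
    have hv : varpiCoef ℓ (m + m) 0 = 0 := by simp [varpiCoef]
    rw [hd, hv, Finset.card_range]
    push_cast
    ring
  · -- k > 0 : two diagonals
    have hset : ((Finset.range m) ×ˢ (Finset.range (m + m))).filter
          (fun pq => resN ℓ pq.1 pq.2 = k)
        = ((Finset.range (min m (m + m - k))).image (fun p => (p, p + k)))
          ∪ ((Finset.Ico k m).image (fun p => (p, p - k))) := by
      ext ⟨p, q⟩
      simp only [Finset.mem_filter, Finset.mem_product, Finset.mem_range,
        Finset.mem_union, Finset.mem_image, Finset.mem_Ico, lt_min_iff]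
      constructor
      · rintro ⟨⟨hp, hq⟩, hres⟩
        rw [resN_abs ℓ p q (by omega) (by omega)] at hres
        split_ifs at hres with hle
        · left; exact ⟨p, by omega, by rw [Prod.mk.injEq]; omega⟩
        · right; exact ⟨p, by omega, by rw [Prod.mk.injEq]; omega⟩
      · rintro (⟨a, ha, h⟩ | ⟨a, ha, h⟩) <;> rw [Prod.mk.injEq] at h <;>
          obtain ⟨rfl, rfl⟩ := h
        · refine ⟨⟨by omega, by omega⟩, ?_⟩
          rw [resN_abs ℓ a (a + k) (by omega) (by omega)]
          simp
        · refine ⟨⟨by omega, by omega⟩, ?_⟩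
          rw [resN_abs ℓ a (a - k) (by omega) (by omega), if_neg (by omega)]
          omega
    rw [hset, Finset.card_union_of_disjoint, Finset.card_image_of_injective,
      Finset.card_image_of_injective, Finset.card_range, Nat.card_Ico]
    · -- arithmetic
      by_cases h1 : k < m + m
      · have hN : min m (m + m - k) + (m - k) = m + m - k := by omega
        have hd : delCoef ℓ k = 2 := by
          rw [delCoef, if_neg (by omega), if_pos (by omega)]
        have hv : varpiCoef ℓ (m + m) k = k := by
          rw [varpiCoef]
          rw [if_neg (by omega), if_neg (by omega), if_pos h1]
        rw [hN, hd, hv]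
        have : ((m + m - k : ℕ) : ℚ) = (m : ℚ) + m - k := by
          push_cast [Nat.cast_sub h1.le]
          ring
        rw [this]
        push_cast
        ring
      · have hN : min m (m + m - k) + (m - k) = 0 := by omega
        rw [hN]
        rcases lt_trichotomy k ℓ with h2 | h2 | h2
        · have hd : delCoef ℓ k = 2 := by
            rw [delCoef, if_neg (by omega), if_pos (by omega)]
          have hv : varpiCoef ℓ (m + m) k = (m + m : ℕ) := by
            rw [varpiCoef, if_neg (by omega), if_neg (by omega), if_neg h1]
          rw [hd, hv]
          push_cast
          ring
        · have hd : delCoef ℓ k = 1 := by rw [delCoef, if_pos (Or.inr h2)]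
          have hv : varpiCoef ℓ (m + m) k = ((m + m : ℕ) : ℚ) / 2 := by
            rw [varpiCoef, if_neg (by omega), if_pos h2]
          rw [hd, hv]
          push_cast
          ring
        · have hd : delCoef ℓ k = 0 := by
            rw [delCoef, if_neg (by omega), if_neg (by omega)]
          have hv : varpiCoef ℓ (m + m) k = 0 := by
            rw [varpiCoef, if_pos (Or.inr h2)]
          rw [hd, hv]
          push_cast
          ring
    · intro a b h; exact (Prod.ext_iff.mp h).1
    · intro a b h; exact (Prod.ext_iff.mp h).1
    · rw [Finset.disjoint_left]
      rintro ⟨p, q⟩ hA hB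
      simp only [Finset.mem_image, Finset.mem_range, Finset.mem_Ico] at hA hB
      obtain ⟨a, ha, h1⟩ := hA
      obtain ⟨b, hb, h2⟩ := hB
      rw [Prod.mk.injEq] at h1 h2
      omega
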